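/- arXiv:2112.12427 — 2 statements merged into one kernel-verified Lean document; each statement's English description precedes it below -/
import Mathlib

section
/- The difference (ln a_{n+1})/(n+1) − (ln a_n)/n converges to 0 as n → ∞. -/
/-!
Write `b_k = C(n-1,k) C(n+k,k)` and `P_n = ∑_{k<n} b_k²`. Apart from the summand `-1` at
`k = 0`, `n a_n` is a combination of the `b_k²` with weights in `[1/(4n²), 1]`, so `a_n` and `P_n`
agree up to a factor `8n³` as soon as `P_n ≥ 8n² + 2`. Going from `n` to `n + 1` multiplies each
`b_k` by at most `2n`, and the new top term is at most four times the old one, so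
`P_n ≤ P_{n+1} ≤ 8n² P_n`; moreover `P_n ≤ 128ⁿ`. Hence `log a_n = O(n)` while
`log a_{n+1} - log a_n = O(log n)`, and
`log a_{n+1}/(n+1) - log a_n/n = (n (log a_{n+1} - log a_n) - log a_n) / (n (n+1)) → 0`.
-/

noncomputable def a (n : ℕ) : ℝ :=
  (1 / (n : ℝ)) * ∑ k ∈ Finset.range n,
    ((n - 1).choose k : ℝ) ^ 2 * ((n + k).choose k : ℝ) ^ 2 / (4 * (k : ℝ) ^ 2 - 1)

open Finset Filter Asymptotics Real Topology

def binomTerm (n k : ℕ) : ℕ := (n - 1).choose k * (n + k).choose k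

def binomSqSum (n : ℕ) : ℕ := ∑ k ∈ range n, binomTerm n k ^ 2

lemma binomTerm_zero_right (n : ℕ) : binomTerm n 0 = 1 := by simp [binomTerm]

lemma binomTerm_le_binomTerm_succ (n k : ℕ) : binomTerm n k ≤ binomTerm (n + 1) k :=
  Nat.mul_le_mul (Nat.choose_le_choose k (by omega)) (Nat.choose_le_choose k (by omega))

lemma binomTerm_succ_le {n k : ℕ} (hk : k < n) : binomTerm (n + 1) k ≤ 2 * n * binomTerm n k := by
  obtain ⟨m, rfl⟩ : ∃ m, n = m + 1 := ⟨n - 1, by omega⟩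
  have h₁ : (m + 1).choose k ≤ (m + 1) * m.choose k := by
    have := Nat.choose_mul_succ_eq m k
    calc (m + 1).choose k ≤ (m + 1).choose k * (m + 1 - k) := Nat.le_mul_of_pos_right _ (by omega)
      _ = (m + 1) * m.choose k := by rw [← this, mul_comm]
  have h₂ : (m + 1 + 1 + k).choose k ≤ 2 * (m + 1 + k).choose k := by
    have := Nat.choose_mul_succ_eq (m + 1 + k) k
    rw [show m + 1 + k + 1 - k = m + 2 by omega] at this
    refine Nat.le_of_mul_le_mul_right (c := m + 2) ?_ (by omega)
    calc (m + 1 + 1 + k).choose k * (m + 2) = (m + 1 + k).choose k * (m + 1 + k + 1) := by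
          rw [this]; ring_nf
      _ ≤ 2 * (m + 1 + k).choose k * (m + 2) := by nlinarith
  simp only [binomTerm, Nat.add_sub_cancel]
  calc (m + 1).choose k * (m + 1 + 1 + k).choose k
      ≤ ((m + 1) * m.choose k) * (2 * (m + 1 + k).choose k) := Nat.mul_le_mul h₁ h₂
    _ = 2 * (m + 1) * (m.choose k * (m + 1 + k).choose k) := by ring

lemma binomTerm_succ_self_le {n : ℕ} (hn : 1 ≤ n) :
    binomTerm (n + 1) n ≤ 4 * binomTerm n (n - 1) := by
  obtain ⟨m, rfl⟩ : ∃ m, n = m + 1 := ⟨n - 1, by omega⟩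
  have h₁ := Nat.add_one_mul_choose_eq (2 * m + 2) m
  have h₂ := Nat.choose_mul_succ_eq (2 * m + 1) m
  rw [show 2 * m + 1 + 1 - m = m + 2 by omega] at h₂
  simp only [binomTerm, Nat.add_sub_cancel, Nat.choose_self, one_mul]
  rw [show m + 1 + 1 + (m + 1) = 2 * m + 2 + 1 by ring, show m + 1 + m = 2 * m + 1 by ring]
  refine Nat.le_of_mul_le_mul_right (c := (m + 1) * (m + 2)) ?_ (by positivity)
  nlinarith

lemma binomSqSum_le_succ (n : ℕ) : binomSqSum n ≤ binomSqSum (n + 1) := by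
  calc binomSqSum n ≤ ∑ k ∈ range n, binomTerm (n + 1) k ^ 2 :=
        sum_le_sum fun k _ => Nat.pow_le_pow_left (binomTerm_le_binomTerm_succ n k) 2
    _ ≤ binomSqSum (n + 1) := sum_le_sum_of_subset (range_subset_range.mpr (by omega))

lemma binomSqSum_succ_le {n : ℕ} (hn : 2 ≤ n) : binomSqSum (n + 1) ≤ 8 * n ^ 2 * binomSqSum n := by
  have hbulk : ∑ k ∈ range n, binomTerm (n + 1) k ^ 2 ≤ 4 * n ^ 2 * binomSqSum n := by
    rw [binomSqSum, mul_sum]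
    refine sum_le_sum fun k hk => ?_
    calc binomTerm (n + 1) k ^ 2 ≤ (2 * n * binomTerm n k) ^ 2 :=
          Nat.pow_le_pow_left (binomTerm_succ_le (mem_range.mp hk)) 2
      _ = 4 * n ^ 2 * binomTerm n k ^ 2 := by ring
  have htop : binomTerm (n + 1) n ^ 2 ≤ 4 * n ^ 2 * binomSqSum n := by
    have hle : binomTerm n (n - 1) ^ 2 ≤ binomSqSum n :=
      single_le_sum (f := fun k => binomTerm n k ^ 2) (fun _ _ => Nat.zero_le _)
        (mem_range.mpr (by omega))
    calc binomTerm (n + 1) n ^ 2 ≤ (4 * binomTerm n (n - 1)) ^ 2 :=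
          Nat.pow_le_pow_left (binomTerm_succ_self_le (by omega)) 2
      _ = 16 * binomTerm n (n - 1) ^ 2 := by ring
      _ ≤ 4 * n ^ 2 * binomSqSum n := Nat.mul_le_mul (by nlinarith) hle
  rw [binomSqSum, sum_range_succ]
  linarith

lemma eight_mul_sq_add_two_le_binomSqSum {n : ℕ} (hn : 4 ≤ n) : 8 * n ^ 2 + 2 ≤ binomSqSum n := by
  obtain ⟨m, rfl⟩ : ∃ m, n = m + 1 := ⟨n - 1, by omega⟩
  have hsub : ({0, 1} : Finset ℕ) ⊆ range (m + 1) := by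
    intro k hk; simp only [mem_insert, mem_singleton] at hk; simp only [mem_range]; omega
  have h := sum_le_sum_of_subset (f := fun k => binomTerm (m + 1) k ^ 2) hsub
  rw [sum_pair zero_ne_one, binomTerm_zero_right] at h
  have h₁ : binomTerm (m + 1) 1 = m * (m + 2) := by simp [binomTerm]
  rw [h₁] at h
  change _ ≤ binomSqSum (m + 1) at h
  have h₂ : (3 * (m + 2)) ^ 2 ≤ (m * (m + 2)) ^ 2 := Nat.pow_le_pow_left (by nlinarith) 2
  nlinarith

lemma binomTerm_le_eight_pow {n k : ℕ} (hk : k < n) : binomTerm n k ≤ 8 ^ n := by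
  calc binomTerm n k ≤ 2 ^ n * 2 ^ (2 * n) :=
        Nat.mul_le_mul ((Nat.choose_le_two_pow _ _).trans (Nat.pow_le_pow_right two_pos (by omega)))
          ((Nat.choose_le_two_pow _ _).trans (Nat.pow_le_pow_right two_pos (by omega)))
    _ = 8 ^ n := by rw [← pow_add, show n + 2 * n = 3 * n by ring, pow_mul]; norm_num

lemma binomSqSum_le (n : ℕ) : binomSqSum n ≤ 128 ^ n := by
  calc binomSqSum n ≤ ∑ _k ∈ range n, 64 ^ n := sum_le_sum fun k hk =>
        (Nat.pow_le_pow_left (binomTerm_le_eight_pow (mem_range.mp hk)) 2).trans_eq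
          (by rw [← pow_mul, mul_comm, pow_mul]; norm_num)
    _ = n * 64 ^ n := by simp
    _ ≤ 2 ^ n * 64 ^ n := Nat.mul_le_mul_right _ Nat.lt_two_pow_self.le
    _ = 128 ^ n := by rw [← mul_pow]; norm_num

lemma a_eq (n : ℕ) : a n = (∑ k ∈ range n, (binomTerm n k : ℝ) ^ 2 / (4 * k ^ 2 - 1)) / n := by
  simp [a, binomTerm, mul_pow, div_eq_inv_mul]

lemma a_le_binomSqSum (n : ℕ) : a n ≤ binomSqSum n := by
  have hterm : ∀ k ∈ range n,
      (binomTerm n k : ℝ) ^ 2 / (4 * k ^ 2 - 1) ≤ (binomTerm n k : ℝ) ^ 2 := by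
    intro k _
    rcases Nat.eq_zero_or_pos k with rfl | hk
    · simp [binomTerm_zero_right]
    · have : (1 : ℝ) ≤ k := by exact_mod_cast hk
      exact div_le_self (sq_nonneg _) (by nlinarith)
  rw [a_eq, binomSqSum]
  push_cast
  rcases Nat.eq_zero_or_pos n with rfl | hn
  · simp
  · exact (div_le_self (sum_nonneg fun _ _ => sq_nonneg _) (by exact_mod_cast hn)).trans'
      (div_le_div_of_nonneg_right (sum_le_sum hterm) (Nat.cast_nonneg n))

lemma binomSqSum_le_mul_a {n : ℕ} (hn : 4 ≤ n) : (binomSqSum n : ℝ) ≤ 8 * n ^ 3 * a n := by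
  obtain ⟨m, rfl⟩ : ∃ m, n = m + 1 := ⟨n - 1, by omega⟩
  set N : ℝ := ((m + 1 : ℕ) : ℝ)
  have hN : 4 ≤ N := by simp only [N]; exact_mod_cast hn
  set S := ∑ k ∈ range m, (binomTerm (m + 1) (k + 1) : ℝ) ^ 2
  have hS : (binomSqSum (m + 1) : ℝ) = S + 1 := by
    rw [binomSqSum, sum_range_succ', binomTerm_zero_right]; push_cast; ring
  have hbig : 8 * N ^ 2 + 2 ≤ (binomSqSum (m + 1) : ℝ) := by
    simp only [N]; exact_mod_cast eight_mul_sq_add_two_le_binomSqSum hn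
  have hNa : N * a (m + 1) =
      ∑ k ∈ range m, (binomTerm (m + 1) (k + 1) : ℝ) ^ 2 / (4 * ((k + 1 : ℕ) : ℝ) ^ 2 - 1) - 1 := by
    rw [a_eq, mul_div_cancel₀ _ (by positivity), sum_range_succ', binomTerm_zero_right]
    norm_num
    ring
  -- the `k = 0` summand is `-1`; the other denominators `4k² - 1` lie in `(0, 4N²]`
  have hlow : S / (4 * N ^ 2) - 1 ≤ N * a (m + 1) := by
    rw [hNa, sum_div, sub_le_sub_iff_right]
    refine sum_le_sum fun k hk => div_le_div_of_nonneg_left (sq_nonneg _) ?_ ?_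
    all_goals
      have hkN : ((k + 1 : ℕ) : ℝ) ≤ N := by
        simp only [N]; exact_mod_cast (show k + 1 ≤ m + 1 by have := mem_range.mp hk; omega)
      have hk1 : (1 : ℝ) ≤ ((k + 1 : ℕ) : ℝ) := by exact_mod_cast Nat.le_add_left 1 k
      nlinarith
  calc (binomSqSum (m + 1) : ℝ) ≤ 8 * N ^ 2 * (S / (4 * N ^ 2) - 1) := by
        have : 8 * N ^ 2 * (S / (4 * N ^ 2) - 1) = 2 * S - 8 * N ^ 2 := by field_simp; ring
        linarith
    _ ≤ 8 * N ^ 2 * (N * a (m + 1)) := by gcongr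
    _ = 8 * N ^ 3 * a (m + 1) := by ring

lemma abs_log_sub_log_le_of_le {u v c : ℝ} (hv : 0 < v) (hvu : v ≤ u) (huv : u ≤ c * v) :
    |log u - log v| ≤ log c := by
  have hc : 0 < c := pos_of_mul_pos_left ((hv.trans_le hvu).trans_le huv) hv.le
  have hmono := log_le_log hv hvu
  have hbound := log_le_log (hv.trans_le hvu) huv
  rw [log_mul hc.ne' hv.ne'] at hbound
  rw [abs_of_nonneg (sub_nonneg.mpr hmono)]
  linarith

lemma isLittleO_natCast_of_abs_le_log_mul_pow {f : ℕ → ℝ} {c : ℝ} {p : ℕ} (hc : 0 < c)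
    (hf : ∀ᶠ n in atTop, |f n| ≤ log (c * n ^ p)) : f =o[atTop] (fun n => (n : ℝ)) := by
  have hlog : (fun n : ℕ => log (n : ℝ)) =o[atTop] (fun n => (n : ℝ)) :=
    isLittleO_log_id_atTop.comp_tendsto tendsto_natCast_atTop_atTop
  have hconst : (fun _ : ℕ => log c) =o[atTop] (fun n => (n : ℝ)) :=
    (isLittleO_const_id_atTop _).comp_tendsto tendsto_natCast_atTop_atTop
  have hbound : (fun n : ℕ => log (c * n ^ p)) =o[atTop] (fun n => (n : ℝ)) := by
    refine (hconst.add (hlog.const_mul_left p)).congr' ?_ EventuallyEq.rfl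
    filter_upwards [eventually_ge_atTop 1] with n hn
    rw [log_mul hc.ne' (by positivity), log_pow]
  refine IsBigO.trans_isLittleO (IsBigO.of_bound 1 ?_) hbound
  filter_upwards [hf] with n hn
  rw [one_mul, norm_eq_abs, norm_eq_abs]
  exact hn.trans (le_abs_self _)

lemma isLittleO_natCast_comp_add_one {f : ℕ → ℝ} (hf : f =o[atTop] (fun n => (n : ℝ))) :
    (fun n => f (n + 1)) =o[atTop] (fun n => (n : ℝ)) := by
  refine (hf.comp_tendsto (tendsto_add_atTop_nat 1)).trans_isBigO (IsBigO.of_bound 2 ?_)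
  filter_upwards [eventually_ge_atTop 1] with n hn
  have : (1 : ℝ) ≤ n := by exact_mod_cast hn
  simp only [Function.comp_apply, Nat.cast_add, Nat.cast_one, norm_eq_abs]
  rw [abs_of_nonneg (by positivity), abs_of_nonneg (by positivity)]
  linarith

theorem tendsto_div_succ_sub_div_of_isBigO_of_isLittleO {x : ℕ → ℝ}
    (hx : x =O[atTop] (fun n => (n : ℝ)))
    (hdx : (fun n => x (n + 1) - x n) =o[atTop] (fun n => (n : ℝ))) :
    Tendsto (fun n : ℕ => x (n + 1) / ((n : ℝ) + 1) - x n / n) atTop (𝓝 0) := by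
  have hsq : (fun n : ℕ => (n : ℝ)) =o[atTop] (fun n => (n : ℝ) * n) := by
    simpa [sq, Function.comp_def] using
      (isLittleO_pow_pow_atTop_of_lt (𝕜 := ℝ) one_lt_two).comp_tendsto tendsto_natCast_atTop_atTop
  have hnum : (fun n : ℕ => n * (x (n + 1) - x n) - x n) =o[atTop] (fun n => (n : ℝ) * n) :=
    ((isBigO_refl _ _).mul_isLittleO hdx).sub (hx.trans_isLittleO hsq)
  have hden : (fun n : ℕ => (n : ℝ) * n) =O[atTop] (fun n => (n : ℝ) * (n + 1)) := by
    refine IsBigO.of_bound 1 (Eventually.of_forall fun n => ?_)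
    simp only [norm_mul, norm_eq_abs, one_mul]
    gcongr
    linarith
  refine (hnum.trans_isBigO hden).tendsto_div_nhds_zero.congr' ?_
  filter_upwards [eventually_ge_atTop 1] with n hn
  have : (n : ℝ) ≠ 0 := by positivity
  field_simp
  ring

lemma one_le_binomSqSum {n : ℕ} (hn : 4 ≤ n) : 1 ≤ binomSqSum n :=
  (eight_mul_sq_add_two_le_binomSqSum hn).trans' (by omega)

lemma isLittleO_log_binomSqSum_sub_log_a :
    (fun n => log (binomSqSum n) - log (a n)) =o[atTop] (fun n => (n : ℝ)) := by
  refine isLittleO_natCast_of_abs_le_log_mul_pow (c := 8) (p := 3) (by norm_num) ?_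
  filter_upwards [eventually_ge_atTop 4] with n hn
  have hP : (0 : ℝ) < binomSqSum n := by exact_mod_cast one_le_binomSqSum hn
  have hupper := binomSqSum_le_mul_a hn
  have ha : 0 < a n := pos_of_mul_pos_right (hP.trans_le hupper) (by positivity)
  exact abs_log_sub_log_le_of_le ha (a_le_binomSqSum n) hupper

lemma isBigO_log_binomSqSum :
    (fun n => log (binomSqSum n : ℝ)) =O[atTop] (fun n => (n : ℝ)) := by
  refine IsBigO.of_bound (log 128) ?_
  filter_upwards [eventually_ge_atTop 4] with n hn
  have hP : (1 : ℝ) ≤ binomSqSum n := by exact_mod_cast one_le_binomSqSum hn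
  have hle : (binomSqSum n : ℝ) ≤ 128 ^ n := by exact_mod_cast binomSqSum_le n
  rw [norm_eq_abs, norm_eq_abs, abs_of_nonneg (log_nonneg hP), Nat.abs_cast, mul_comm, ← log_pow]
  exact log_le_log (one_pos.trans_le hP) hle

lemma isLittleO_log_binomSqSum_succ_sub :
    (fun n => log (binomSqSum (n + 1) : ℝ) - log (binomSqSum n)) =o[atTop]
      (fun n => (n : ℝ)) := by
  refine isLittleO_natCast_of_abs_le_log_mul_pow (c := 8) (p := 2) (by norm_num) ?_
  filter_upwards [eventually_ge_atTop 4] with n hn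
  have hP : (0 : ℝ) < binomSqSum n := by exact_mod_cast one_le_binomSqSum hn
  have hmono : (binomSqSum n : ℝ) ≤ binomSqSum (n + 1) := by exact_mod_cast binomSqSum_le_succ n
  have hsucc : (binomSqSum (n + 1) : ℝ) ≤ 8 * n ^ 2 * binomSqSum n := by
    exact_mod_cast binomSqSum_succ_le (by omega : 2 ≤ n)
  exact abs_log_sub_log_le_of_le hP hmono hsucc

theorem a_log_diff_tendsto_zero :
    Filter.Tendsto
      (fun n : ℕ => Real.log (a (n + 1)) / ((n : ℝ) + 1) - Real.log (a n) / (n : ℝ))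
      Filter.atTop (nhds 0) := by
  have hr := isLittleO_log_binomSqSum_sub_log_a
  refine tendsto_div_succ_sub_div_of_isBigO_of_isLittleO (x := fun n => log (a n))
    ((isBigO_log_binomSqSum.sub hr.isBigO).congr_left fun n => sub_sub_cancel _ _) ?_
  exact (isLittleO_log_binomSqSum_succ_sub.sub
    ((isLittleO_natCast_comp_add_one hr).sub hr)).congr_left fun n => by ring
end

section
/- The difference (ln b_{n+1})/(n+1) − (ln b_n)/n converges to 0 as n → ∞. -/
/-!
Write `b n = S n / n ^ 3` with `S n` the integer sum in the definition of `b`. Then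
`S n ≤ S (n + 1) ≤ C * S n` for an absolute constant `C`: the `k`-th term of `S (n + 1)` is a
bounded multiple of the `k`-th term of `S n` when `2 k ≤ n`, and of the `(k - 1)`-st term when
`2 k > n`, because the binomial coefficients change by bounded factors in these ranges. Hence
`u = log b` has bounded increments, so `u n = O(n)`, and
`u (n + 1) / (n + 1) - u n / n = (n * (u (n + 1) - u n) - u n) / (n * (n + 1)) = O(1 / n)`.
-/

open Finset Filter Topology

noncomputable def b (n : ℕ) : ℝ :=
  (1 / (n : ℝ) ^ 3) * ∑ k ∈ Finset.range n,
    (3 * (k : ℝ) ^ 2 + 3 * (k : ℝ) + 1) * ((n - 1).choose k : ℝ) ^ 2 * ((n + k).choose k : ℝ) ^ 2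

lemma abs_le_abs_zero_add_mul_of_abs_succ_sub_le {u : ℕ → ℝ} {M : ℝ}
    (hu : ∀ n, |u (n + 1) - u n| ≤ M) (n : ℕ) : |u n| ≤ |u 0| + M * n := by
  induction n with
  | zero => simp
  | succ n ih =>
    have := abs_sub_abs_le_abs_sub (u (n + 1)) (u n)
    push_cast
    linarith [hu n]

theorem tendsto_div_succ_sub_div_of_abs_succ_sub_le {u : ℕ → ℝ} {M : ℝ}
    (hu : ∀ n, |u (n + 1) - u n| ≤ M) :
    Tendsto (fun n : ℕ => u (n + 1) / ((n : ℝ) + 1) - u n / n) atTop (𝓝 0) := by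
  have hM : 0 ≤ M := (abs_nonneg _).trans (hu 0)
  refine squeeze_zero_norm' ?_ (tendsto_const_div_atTop_nhds_zero_nat (2 * M + |u 0|))
  filter_upwards [eventually_gt_atTop 0] with n hn
  have hn : (1 : ℝ) ≤ n := by exact_mod_cast hn
  have hnum : |n * (u (n + 1) - u n) - u n| ≤ (2 * M + |u 0|) * n := by
    have h₁ := mul_le_mul_of_nonneg_left (hu n) (by positivity : (0 : ℝ) ≤ n)
    have h₂ := abs_le_abs_zero_add_mul_of_abs_succ_sub_le hu n
    calc _ ≤ |n * (u (n + 1) - u n)| + |u n| := abs_sub _ _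
      _ = n * |u (n + 1) - u n| + |u n| := by rw [abs_mul, abs_of_nonneg (by positivity)]
      _ ≤ (2 * M + |u 0|) * n := by nlinarith [abs_nonneg (u 0)]
  calc ‖u (n + 1) / ((n : ℝ) + 1) - u n / n‖
      = |n * (u (n + 1) - u n) - u n| / (n * (n + 1)) := by
        rw [Real.norm_eq_abs, ← abs_of_pos (by positivity : (0 : ℝ) < n * (n + 1)), ← abs_div]
        congr 1
        field_simp
        ring
    _ ≤ (2 * M + |u 0|) * n / (n * (n + 1)) := by gcongr
    _ ≤ (2 * M + |u 0|) / n := by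
        rw [div_le_div_iff₀ (by positivity) (by positivity)]
        nlinarith [abs_nonneg (u 0)]

namespace Nat

lemma succ_choose_le_mul_choose {n k c : ℕ} (h : n + 1 ≤ c * (n + 1 - k)) :
    (n + 1).choose k ≤ c * n.choose k := by
  have hk : 0 < n + 1 - k := Nat.pos_of_ne_zero fun h0 => by rw [h0, mul_zero] at h; omega
  refine Nat.le_of_mul_le_mul_right ?_ hk
  calc (n + 1).choose k * (n + 1 - k) = n.choose k * (n + 1) := (choose_mul_succ_eq n k).symm
    _ ≤ n.choose k * (c * (n + 1 - k)) := Nat.mul_le_mul_left _ h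
    _ = c * n.choose k * (n + 1 - k) := by ring

lemma succ_choose_succ_le_mul_choose {n k c : ℕ} (h : n + 1 ≤ c * (k + 1)) :
    (n + 1).choose (k + 1) ≤ c * n.choose k := by
  refine Nat.le_of_mul_le_mul_right ?_ k.succ_pos
  calc (n + 1).choose (k + 1) * (k + 1) = (n + 1) * n.choose k := (add_one_mul_choose_eq n k).symm
    _ ≤ c * (k + 1) * n.choose k := Nat.mul_le_mul_right _ h
    _ = c * n.choose k * (k + 1) := by ring

end Nat

lemma Real.abs_log_sub_log_le {x y C : ℝ} (hx : 0 < x) (hy : 0 < y) (hyx : y ≤ C * x)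
    (hxy : x ≤ C * y) : |Real.log y - Real.log x| ≤ Real.log C := by
  have hC : 0 < C := pos_of_mul_pos_left (hy.trans_le hyx) hx.le
  have h₁ := Real.log_le_log hy hyx
  have h₂ := Real.log_le_log hx hxy
  rw [Real.log_mul hC.ne' hx.ne'] at h₁
  rw [Real.log_mul hC.ne' hy.ne'] at h₂
  exact abs_sub_le_iff.2 ⟨by linarith, by linarith⟩

def bTerm (n k : ℕ) : ℕ := (3 * k ^ 2 + 3 * k + 1) * ((n - 1).choose k * (n + k).choose k) ^ 2

def bSum (n : ℕ) : ℕ := ∑ k ∈ range n, bTerm n k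

lemma b_eq_bSum_div (n : ℕ) : b n = bSum n / (n : ℝ) ^ 3 := by
  simp only [b, bSum, bTerm, Nat.cast_sum, one_div, inv_mul_eq_div]
  push_cast
  congr 1
  exact sum_congr rfl fun k _ => by ring

lemma bTerm_zero (n : ℕ) : bTerm n 0 = 1 := by simp [bTerm]

lemma bTerm_self (n : ℕ) : bTerm (n + 1) (n + 1) = 0 := by simp [bTerm]

lemma one_le_bSum_succ (n : ℕ) : 1 ≤ bSum (n + 1) :=
  calc 1 = bTerm (n + 1) 0 := (bTerm_zero _).symm
    _ ≤ bSum (n + 1) := single_le_sum (fun _ _ => Nat.zero_le _) (mem_range.2 n.succ_pos)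

lemma bTerm_le_bTerm_succ (n k : ℕ) : bTerm n k ≤ bTerm (n + 1) k := by
  unfold bTerm
  gcongr <;> omega

lemma bSum_le_bSum_succ (n : ℕ) : bSum n ≤ bSum (n + 1) :=
  calc bSum n ≤ ∑ k ∈ range n, bTerm (n + 1) k := sum_le_sum fun k _ => bTerm_le_bTerm_succ n k
    _ ≤ bSum (n + 1) := sum_le_sum_of_subset (range_subset_range.2 n.le_succ)

lemma bTerm_succ_le_of_two_mul_le {n k : ℕ} (h : 2 * k ≤ n + 1) :
    bTerm (n + 2) k ≤ 16 * bTerm (n + 1) k := by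
  have h₁ : (n + 1).choose k ≤ 2 * n.choose k := Nat.succ_choose_le_mul_choose (by omega)
  have h₂ : (n + 1 + k + 1).choose k ≤ 2 * (n + 1 + k).choose k :=
    Nat.succ_choose_le_mul_choose (by omega)
  calc bTerm (n + 2) k
        = (3 * k ^ 2 + 3 * k + 1) * ((n + 1).choose k * (n + 1 + k + 1).choose k) ^ 2 := by
        rw [bTerm, show n + 2 - 1 = n + 1 by omega, show n + 2 + k = n + 1 + k + 1 by ring]
    _ ≤ (3 * k ^ 2 + 3 * k + 1) * ((2 * n.choose k) * (2 * (n + 1 + k).choose k)) ^ 2 := by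
        gcongr
    _ = 16 * bTerm (n + 1) k := by simp only [bTerm, Nat.add_sub_cancel]; ring

lemma bTerm_succ_succ_le_of_le_two_mul {n k : ℕ} (h : n ≤ 2 * k) (hk : k ≤ n) :
    bTerm (n + 2) (k + 1) ≤ 1008 * bTerm (n + 1) k := by
  have h₁ : (n + 1).choose (k + 1) ≤ 2 * n.choose k :=
    Nat.succ_choose_succ_le_mul_choose (by omega)
  have h₂ : (n + 1 + k + 1 + 1).choose (k + 1) ≤ 2 * (n + 1 + k + 1).choose (k + 1) :=
    Nat.succ_choose_le_mul_choose (by omega)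
  have h₃ : (n + 1 + k + 1).choose (k + 1) ≤ 3 * (n + 1 + k).choose k :=
    Nat.succ_choose_succ_le_mul_choose (by omega)
  have hp : 3 * (k + 1) ^ 2 + 3 * (k + 1) + 1 ≤ 7 * (3 * k ^ 2 + 3 * k + 1) := by nlinarith
  calc bTerm (n + 2) (k + 1) = (3 * (k + 1) ^ 2 + 3 * (k + 1) + 1) *
        ((n + 1).choose (k + 1) * (n + 1 + k + 1 + 1).choose (k + 1)) ^ 2 := by
        rw [bTerm, show n + 2 - 1 = n + 1 by omega,
          show n + 2 + (k + 1) = n + 1 + k + 1 + 1 by ring]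
    _ ≤ 7 * (3 * k ^ 2 + 3 * k + 1) * (2 * n.choose k * (2 * (3 * (n + 1 + k).choose k))) ^ 2 := by
        gcongr
        exact h₂.trans (Nat.mul_le_mul_left 2 h₃)
    _ = 1008 * bTerm (n + 1) k := by simp only [bTerm, Nat.add_sub_cancel]; ring

lemma bTerm_succ_le {n k : ℕ} (hk : k ≤ n + 1) :
    bTerm (n + 2) k ≤ 1008 * (bTerm (n + 1) k + bTerm (n + 1) (k - 1)) := by
  rcases le_or_gt (2 * k) (n + 1) with h | h
  · have := bTerm_succ_le_of_two_mul_le h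
    omega
  · obtain ⟨j, rfl⟩ : ∃ j, k = j + 1 := Nat.exists_eq_add_one.2 (by omega)
    have := bTerm_succ_succ_le_of_le_two_mul (n := n) (k := j) (by omega) (by omega)
    simp only [Nat.add_sub_cancel]
    omega

lemma bSum_succ_le (n : ℕ) : bSum (n + 2) ≤ 3024 * bSum (n + 1) := by
  have hshift : ∑ k ∈ range (n + 2), bTerm (n + 1) (k - 1) = 1 + bSum (n + 1) := by
    rw [sum_range_succ', bSum]
    simp [bTerm_zero, add_comm]
  have hself : ∑ k ∈ range (n + 2), bTerm (n + 1) k = bSum (n + 1) := by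
    rw [sum_range_succ, bTerm_self, add_zero, bSum]
  calc bSum (n + 2) ≤ ∑ k ∈ range (n + 2), 1008 * (bTerm (n + 1) k + bTerm (n + 1) (k - 1)) :=
        sum_le_sum fun k hk => bTerm_succ_le (Nat.lt_succ_iff.1 (mem_range.1 hk))
    _ = 1008 * (bSum (n + 1) + (1 + bSum (n + 1))) := by
        rw [← mul_sum, sum_add_distrib, hself, hshift]
    _ ≤ 3024 * bSum (n + 1) := by linarith [one_le_bSum_succ n]

lemma b_pos (n : ℕ) : 0 < b (n + 1) := by
  have : (1 : ℝ) ≤ bSum (n + 1) := by exact_mod_cast one_le_bSum_succ n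
  rw [b_eq_bSum_div]
  positivity

lemma b_succ_succ_le (n : ℕ) : b (n + 2) ≤ 3024 * b (n + 1) := by
  have hS : (bSum (n + 2) : ℝ) ≤ 3024 * bSum (n + 1) := by exact_mod_cast bSum_succ_le n
  rw [b_eq_bSum_div, b_eq_bSum_div, mul_div_assoc']
  calc (bSum (n + 2) : ℝ) / ((n + 2 : ℕ) : ℝ) ^ 3
      ≤ 3024 * bSum (n + 1) / ((n + 2 : ℕ) : ℝ) ^ 3 := by gcongr
    _ ≤ 3024 * bSum (n + 1) / ((n + 1 : ℕ) : ℝ) ^ 3 := by gcongr; simp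

lemma b_succ_le (n : ℕ) : b (n + 1) ≤ 8 * b (n + 2) := by
  have hS : (bSum (n + 1) : ℝ) ≤ bSum (n + 2) := by exact_mod_cast bSum_le_bSum_succ (n + 1)
  have hn : ((n + 2 : ℕ) : ℝ) ^ 3 ≤ 8 * ((n + 1 : ℕ) : ℝ) ^ 3 :=
    calc ((n + 2 : ℕ) : ℝ) ^ 3 ≤ (2 * ((n + 1 : ℕ) : ℝ)) ^ 3 := by gcongr; push_cast; linarith
      _ = 8 * ((n + 1 : ℕ) : ℝ) ^ 3 := by ring
  rw [b_eq_bSum_div, b_eq_bSum_div, mul_div_assoc']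
  calc (bSum (n + 1) : ℝ) / ((n + 1 : ℕ) : ℝ) ^ 3 ≤ bSum (n + 2) / ((n + 1 : ℕ) : ℝ) ^ 3 := by
        gcongr
    _ = 8 * bSum (n + 2) / (8 * ((n + 1 : ℕ) : ℝ) ^ 3) := by
        rw [mul_div_mul_left _ _ (by norm_num)]
    _ ≤ 8 * bSum (n + 2) / ((n + 2 : ℕ) : ℝ) ^ 3 := by gcongr

lemma abs_log_b_succ_sub_log_b_le (n : ℕ) :
    |Real.log (b (n + 1)) - Real.log (b n)| ≤ Real.log 3024 := by
  cases n with
  | zero =>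
    -- `b 0 = 0` and `b 1 = 1`, so both logarithms vanish
    simpa [b] using Real.log_nonneg (by norm_num : (1 : ℝ) ≤ 3024)
  | succ n =>
    exact Real.abs_log_sub_log_le (b_pos n) (b_pos (n + 1)) (b_succ_succ_le n)
      ((b_succ_le n).trans (mul_le_mul_of_nonneg_right (by norm_num) (b_pos (n + 1)).le))

theorem b_log_diff_tendsto_zero :
    Filter.Tendsto
      (fun n : ℕ => Real.log (b (n + 1)) / ((n : ℝ) + 1) - Real.log (b n) / (n : ℝ))
      Filter.atTop (nhds 0) :=
  tendsto_div_succ_sub_div_of_abs_succ_sub_le (u := fun n => Real.log (b n))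
    abs_log_b_succ_sub_log_b_le
end
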